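/- Let j ≥ 1 be a natural number and let v ∈ F₃ satisfy |v| ≤ 5^j. Suppose x(v,j) = z·y where z is an initial block of the reduced word of x(v,j) and y is the rest, i.e. |x(v,j)| = |z| + |y|. If |z| < (1/2)·|x(v,j)|, then in fact θ(y) ≥ (1/2)·|x(v,j)|. -/

import Mathlib

/-- `F₃`, the free group on three generators `a, b, c`. -/
abbrev F3 : Type := FreeGroup (Fin 3)

/-- The generator `a`. -/
def ga : F3 := FreeGroup.of 0
/-- The generator `b`. -/
def gb : F3 := FreeGroup.of 1
/-- The generator `c`. -/
def gc : F3 := FreeGroup.of 2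

/-- The standard generating set `S = {a, b, c, a⁻¹, b⁻¹, c⁻¹}`.
The word length `|u|` with respect to `S` is `FreeGroup.norm u`. -/
def Sgen : Set F3 := {ga, gb, gc, ga⁻¹, gb⁻¹, gc⁻¹}

/-- The `T`-word length of `g`: the least `n ≥ 0` such that `g` is a product of
`n` elements of `T` (the identity has length `0`). -/
noncomputable def wordLen (T : Set F3) (g : F3) : ℕ :=
  sInf {n : ℕ | ∃ l : List F3, (∀ x ∈ l, x ∈ T) ∧ l.prod = g ∧ l.length = n}

/-- `x(v,j) = v b^(5^(2j-1)) v⁻¹ a^(5^(2j)) b^(5^(2j))`. -/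
def xgen (v : F3) (j : ℕ) : F3 :=
  v * gb ^ (5 ^ (2 * j - 1)) * v⁻¹ * ga ^ (5 ^ (2 * j)) * gb ^ (5 ^ (2 * j))

/-- `X_∞ = ⋃_{j ≥ 2} X_j` where `X_j = {x(v,j) : |v| ≤ 5^j}`. -/
def Xinf : Set F3 :=
  ⋃ j ∈ {j : ℕ | 2 ≤ j}, {w : F3 | ∃ v : F3, v.norm ≤ 5 ^ j ∧ w = xgen v j}

/-- The generating set `X = X_∞ ∪ S`. -/
def Xgen : Set F3 := Xinf ∪ Sgen

/-- The homomorphism `F₃ → ℤ` sending the `i`-th generator to `1` and the others to `0`,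
valued in `Multiplicative ℤ`. -/
noncomputable def phi (i : Fin 3) : F3 →* Multiplicative ℤ :=
  FreeGroup.lift fun j => Multiplicative.ofAdd (if j = i then (1 : ℤ) else 0)

/-- `φ_a = phiZ 0`, `φ_b = phiZ 1`, `φ_c = phiZ 2` as `ℤ`-valued functions. -/
noncomputable def phiZ (i : Fin 3) (u : F3) : ℤ := Multiplicative.toAdd (phi i u)

/-- `θ = φ_a + φ_b`. -/
noncomputable def theta (u : F3) : ℤ := phiZ 0 u + phiZ 1 u

namespace ThetaAux
open List

abbrev Ltr := Fin 3 × Bool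

/-- The "no cancellation" relation between adjacent letters. -/
def Good : Ltr → Ltr → Prop := fun p q => ¬(p.1 = q.1 ∧ p.2 = !q.2)

instance : DecidableRel Good := fun _ _ => by unfold Good; infer_instance

lemma reduce_cons_length (x : Ltr) (L : List Ltr) :
    (FreeGroup.reduce (x :: L)).length ≤ (FreeGroup.reduce L).length + 1 := by
  rw [FreeGroup.reduce.cons]
  rcases h : FreeGroup.reduce L with _ | ⟨hd, tl⟩
  · simp
  · by_cases hc : x.1 = hd.1 ∧ x.2 = !hd.2 <;> simp [hc] <;> omega

lemma reduce_length_lt_of_not_chain :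
    ∀ (l : List Ltr), ¬ List.Chain' Good l → (FreeGroup.reduce l).length < l.length := by
  intro l
  induction l with
  | nil => intro h; exact absurd List.isChain_nil h
  | cons a t ih =>
    intro h
    match t, ih with
    | [], _ => exact absurd (List.isChain_singleton a) h
    | b :: t, ih =>
      rw [List.Chain', List.isChain_cons_cons] at h
      by_cases hab : Good a b
      · have ht : ¬ List.Chain' Good (b :: t) := fun hc => h ⟨hab, hc⟩
        have := ih ht
        have h2 := reduce_cons_length a (b :: t)
        simp only [List.length_cons] at *
        omega
      · unfold Good at hab
        push_neg at hab
        obtain ⟨h1, h2⟩ := hab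
        have hb : b = (a.1, !a.2) := by
          rcases b with ⟨b1, b2⟩; rcases a with ⟨a1, a2⟩
          simp only [Prod.mk.injEq] at h1 h2 ⊢
          refine ⟨h1.symm ▸ rfl, ?_⟩
          revert h2; cases a2 <;> cases b2 <;> decide
        have hstep : FreeGroup.Red.Step (a :: b :: t) t := by
          rw [hb]
          have : a = (a.1, a.2) := rfl
          rw [this]
          exact FreeGroup.Red.Step.cons_not
        have := FreeGroup.reduce.Step.eq hstep
        rw [this]
        have : (FreeGroup.reduce t).length ≤ t.length :=
          FreeGroup.Red.length_le (FreeGroup.reduce.red)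
        simp only [List.length_cons]
        omega

lemma chain'_of_reduce {l : List Ltr} (h : FreeGroup.reduce l = l) : List.Chain' Good l := by
  by_contra hc
  have := reduce_length_lt_of_not_chain l hc
  rw [h] at this
  omega

lemma reduce_of_chain' {l : List Ltr} (h : List.Chain' Good l) : FreeGroup.reduce l = l := by
  have hred : FreeGroup.Red l (FreeGroup.reduce l) := FreeGroup.reduce.red
  rcases Relation.ReflTransGen.cases_head hred with heq | ⟨c, hstep, _⟩
  · exact heq.symm
  · exfalso
    cases hstep with
    | @not L₁ L₂ x b =>
      rw [List.Chain', List.isChain_append_cons_cons] at h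
      exact h.2.1 ⟨rfl, by simp⟩

/-- If norms add, the reduced words concatenate. -/
lemma toWord_mul_of_norm_add (z y : FreeGroup (Fin 3))
    (h : (z * y).norm = z.norm + y.norm) :
    (z * y).toWord = z.toWord ++ y.toWord := by
  have hm : z * y = FreeGroup.mk (z.toWord ++ y.toWord) := by
    rw [← FreeGroup.mul_mk, FreeGroup.mk_toWord, FreeGroup.mk_toWord]
  have htw : (z * y).toWord = FreeGroup.reduce (z.toWord ++ y.toWord) := by
    rw [hm, FreeGroup.toWord_mk]
  have hlen : (FreeGroup.reduce (z.toWord ++ y.toWord)).length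
      = (z.toWord ++ y.toWord).length := by
    have h1 : (z * y).toWord.length = (z*y).norm := rfl
    rw [← htw]
    rw [h1, h]
    simp [FreeGroup.norm]
  rw [htw]
  -- reduce K = K when lengths agree
  have hred : FreeGroup.Red (z.toWord ++ y.toWord)
      (FreeGroup.reduce (z.toWord ++ y.toWord)) := FreeGroup.reduce.red
  rcases Relation.ReflTransGen.cases_head hred with heq | ⟨c, hstep, hr⟩
  · exact heq.symm
  · exfalso
    have hc : c.length + 2 = (z.toWord ++ y.toWord).length := FreeGroup.Red.Step.length hstep
    have := FreeGroup.Red.length_le hr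
    omega



lemma mk_replicate_true (i : Fin 3) (n : ℕ) :
    FreeGroup.mk (replicate n (i, true)) = FreeGroup.of i ^ n := by
  rw [← FreeGroup.toWord_of_pow, FreeGroup.mk_toWord]

lemma mk_replicate_false (i : Fin 3) (n : ℕ) :
    FreeGroup.mk (replicate n (i, false)) = (FreeGroup.of i)⁻¹ ^ n := by
  rw [inv_pow, ← mk_replicate_true, FreeGroup.inv_mk]
  congr 1
  simp [FreeGroup.invRev]

lemma chain'_replicate_of_rel {R : Ltr → Ltr → Prop} {x : Ltr} (h : R x x) (n : ℕ) :
    List.Chain' R (replicate n x) := by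
  induction n with
  | zero => simp [List.Chain']
  | succ k ih =>
    rw [replicate_succ, List.Chain', List.isChain_cons]
    refine ⟨?_, ih⟩
    intro y hy
    cases k with
    | zero => simp at hy
    | succ k' =>
      rw [List.replicate_succ] at hy
      simp at hy
      subst hy; exact h

lemma append_pow_toWord (l : List Ltr) (hl : FreeGroup.reduce l = l) (i : Fin 3) (n : ℕ) :
    ∃ (W : List Ltr) (m : ℕ), m ≤ n ∧ W.length + n = l.length + m ∧
      (FreeGroup.mk l * FreeGroup.of i ^ n).toWord = W ++ replicate m (i, true) ∧
      (m < n → l.getLast? = some (i, false)) ∧ W <+: l := by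
  classical
  set pred : Ltr → Bool := fun p => decide (p = (i, false)) with hpred
  set t := (l.reverse.takeWhile pred).length with ht
  set l₀ := (l.reverse.dropWhile pred).reverse with hl₀def
  have hT : l.reverse.takeWhile pred = replicate t (i, false) := by
    rw [List.eq_replicate_iff]
    exact ⟨rfl, fun b hb => by simpa [hpred] using List.mem_takeWhile_imp hb⟩
  have hdecomp : l = l₀ ++ replicate t (i, false) := by
    conv_lhs => rw [← List.reverse_reverse l,
      ← List.takeWhile_append_dropWhile (p := pred) (l := l.reverse)]
    rw [List.reverse_append, hT, List.reverse_replicate, hl₀def]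
  have hlen : l.length = l₀.length + t := by
    rw [hdecomp]; simp
  have hlast₀ : ∀ x ∈ l₀.getLast?, x ≠ (i, false) := by
    intro x hx
    rw [hl₀def, List.getLast?_reverse] at hx
    have h := List.head?_dropWhile_not pred l.reverse
    rcases hh : (l.reverse.dropWhile pred).head? with _ | y
    · rw [hh] at hx; simp at hx
    · rw [hh] at hx h; simp at hx
      subst hx
      simpa [hpred] using h
  have hchain : List.Chain' Good l := chain'_of_reduce hl
  have hchain₀ : List.Chain' Good l₀ := by
    rw [hdecomp] at hchain
    exact (List.isChain_append.mp hchain).1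
  have hmk : FreeGroup.mk l = FreeGroup.mk l₀ * (FreeGroup.of i)⁻¹ ^ t := by
    conv_lhs => rw [hdecomp]
    rw [← FreeGroup.mul_mk, mk_replicate_false]
  by_cases hn : n ≤ t
  · refine ⟨l₀ ++ replicate (t - n) (i, false), 0, Nat.zero_le n, by simp; omega, ?_, ?_, ?_⟩
    · have hid : FreeGroup.mk l * FreeGroup.of i ^ n
          = FreeGroup.mk (l₀ ++ replicate (t - n) (i, false)) := by
        rw [hmk, ← FreeGroup.mul_mk, mk_replicate_false]
        rw [mul_assoc]
        congr 1
        conv_lhs => rw [show t = (t - n) + n from by omega]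
        rw [pow_add, mul_assoc]
        rw [inv_pow ((FreeGroup.of i)) n, inv_mul_cancel, mul_one]
      have hchainW : List.Chain' Good (l₀ ++ replicate (t - n) (i, false)) := by
        have hd2 : l = (l₀ ++ replicate (t - n) (i, false)) ++ replicate n (i, false) := by
          rw [List.append_assoc, ← List.replicate_add]
          rw [show t - n + n = t by omega, ← hdecomp]
        rw [hd2] at hchain
        exact (List.isChain_append.mp hchain).1
      rw [hid, FreeGroup.toWord_mk, reduce_of_chain' hchainW]
      simp
    · intro h0
      have htpos : 0 < t := by omega
      rw [hdecomp, List.getLast?_append, List.getLast?_replicate]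
      simp [show t ≠ 0 by omega]
    · exact ⟨replicate n (i, false), by
        rw [List.append_assoc, ← List.replicate_add, show t - n + n = t by omega, ← hdecomp]⟩
  · push_neg at hn
    refine ⟨l₀, n - t, by omega, by omega, ?_, ?_, ⟨replicate t (i, false), hdecomp.symm⟩⟩
    · have hid : FreeGroup.mk l * FreeGroup.of i ^ n
          = FreeGroup.mk (l₀ ++ replicate (n - t) (i, true)) := by
        rw [hmk, ← FreeGroup.mul_mk, mk_replicate_true, mul_assoc]
        congr 1
        conv_lhs => rw [show n = t + (n - t) from by omega]
        rw [pow_add, inv_pow, inv_mul_cancel_left]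
      have hchainW : List.Chain' Good (l₀ ++ replicate (n - t) (i, true)) := by
        rw [List.Chain', List.isChain_append]
        refine ⟨hchain₀, chain'_replicate_of_rel (by simp [Good]) _, ?_⟩
        intro x hx y hy
        have hxne := hlast₀ x hx
        have hy' : y = (i, true) := by
          rcases hk : n - t with _ | k
          · rw [hk] at hy; simp at hy
          · rw [hk, List.replicate_succ] at hy; simp at hy; exact hy.symm
        subst hy'
        simp only [Good, Bool.not_true]
        rintro ⟨h1, h2⟩
        exact hxne (Prod.ext h1 (by simpa using h2))
      rw [hid, FreeGroup.toWord_mk, reduce_of_chain' hchainW]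
    · intro hmn
      have htpos : 0 < t := by omega
      rw [hdecomp, List.getLast?_append, List.getLast?_replicate]
      simp [show t ≠ 0 by omega]


def cLtr : Ltr → ℤ := fun p => if p.1 = 2 then 0 else if p.2 then 1 else -1

lemma theta_mul (u w : F3) : theta (u * w) = theta u + theta w := by
  simp only [theta, phiZ, map_mul, toAdd_mul]; ring

lemma theta_one : theta 1 = 0 := by simp [theta, phiZ]

lemma theta_inv (u : F3) : theta u⁻¹ = -theta u := by
  simp only [theta, phiZ, map_inv, toAdd_inv]; ring

lemma theta_of (i : Fin 3) :
    theta (FreeGroup.of i) = (if i = 0 then 1 else 0) + (if i = 1 then 1 else 0) := by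
  simp [theta, phiZ, phi, FreeGroup.lift_apply_of]

lemma theta_single (p : Ltr) : theta (FreeGroup.mk [p]) = cLtr p := by
  rcases p with ⟨i, s⟩
  cases s
  · have h1 : FreeGroup.mk [(i, false)] = (FreeGroup.of i)⁻¹ := by
      have hm : FreeGroup.of i * FreeGroup.mk [(i, false)] = 1 := by
        rw [show FreeGroup.of i = FreeGroup.mk [(i, true)] from rfl, FreeGroup.mul_mk,
          ← FreeGroup.reduce.self]
        simp [FreeGroup.reduce]
        rfl
      exact eq_inv_of_mul_eq_one_right hm
    rw [h1, theta_inv, theta_of]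
    fin_cases i <;> simp [cLtr]
  · have h1 : FreeGroup.mk [(i, true)] = FreeGroup.of i := by
      have := mk_replicate_true i 1
      simpa using this
    rw [h1, theta_of]
    fin_cases i <;> simp [cLtr]

lemma theta_mk (l : List Ltr) : theta (FreeGroup.mk l) = (l.map cLtr).sum := by
  induction l with
  | nil => exact theta_one
  | cons p t ih =>
    have : FreeGroup.mk (p :: t) = FreeGroup.mk [p] * FreeGroup.mk t := by
      rw [FreeGroup.mul_mk]; rfl
    rw [this, theta_mul, theta_single, ih, List.map_cons, List.sum_cons]

lemma neg_one_le_cLtr (p : Ltr) : -1 ≤ cLtr p := by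
  rcases p with ⟨i, s⟩; fin_cases i <;> cases s <;> simp [cLtr]

lemma sum_cLtr_ge (l : List Ltr) : -(l.length : ℤ) ≤ (l.map cLtr).sum := by
  induction l with
  | nil => simp
  | cons p t ih =>
    rw [List.map_cons, List.sum_cons, List.length_cons]
    have := neg_one_le_cLtr p
    push_cast
    omega

lemma sum_cLtr_eq_length (l : List Ltr)
    (h : ∀ p ∈ l, p = ((0 : Fin 3), true) ∨ p = ((1 : Fin 3), true)) :
    (l.map cLtr).sum = l.length := by
  induction l with
  | nil => simp
  | cons p t ih =>
    rw [List.map_cons, List.sum_cons, List.length_cons,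
      ih (fun q hq => h q (List.mem_cons_of_mem p hq))]
    rcases h p List.mem_cons_self with hp | hp <;> subst hp <;> simp [cLtr, add_comm]

end ThetaAux

/-- Strengthened Lemma 3.6: if `x(v,j) = z y` with `z` an initial block of the reduced
word and `|z| < (1/2)|x(v,j)|`, then in fact `θ(y) ≥ (1/2)|x(v,j)|`. -/
theorem theta_tail_ge_half (j : ℕ) (hj : 1 ≤ j) (v : F3) (hv : v.norm ≤ 5 ^ j)
    (z y : F3) (hzy : xgen v j = z * y)
    (hred : (xgen v j).norm = z.norm + y.norm)
    (hlt : 2 * z.norm < (xgen v j).norm) :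
    ((xgen v j).norm : ℤ) ≤ 2 * theta y := by
  classical
  obtain ⟨B, hB⟩ : ∃ B, B = 5 ^ (2 * j - 1) := ⟨_, rfl⟩
  obtain ⟨A, hAdef⟩ : ∃ A, A = 5 ^ (2 * j) := ⟨_, rfl⟩
  obtain ⟨w, hw⟩ : ∃ w : F3, w = v * gb ^ B * v⁻¹ := ⟨_, rfl⟩
  have hApos : 0 < A := by rw [hAdef]; positivity
  have hx : xgen v j = w * FreeGroup.of 0 ^ A * FreeGroup.of 1 ^ A := by
    rw [hw, hAdef, hB]; rfl
  have hnw : w.norm ≤ 2 * 5 ^ j + B := by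
    have h1 : w.norm ≤ (v * gb ^ B).norm + v⁻¹.norm := by
      rw [hw]; exact FreeGroup.norm_mul_le _ _
    have h2 : (v * gb ^ B).norm ≤ v.norm + (gb ^ B).norm := FreeGroup.norm_mul_le _ _
    have h3 : (gb ^ B).norm = B := FreeGroup.norm_of_pow _ _
    have h4 : v⁻¹.norm = v.norm := FreeGroup.norm_inv_eq
    omega
  have harith : 3 * (2 * 5 ^ j + B) ≤ 2 * A := by
    have h1 : (5 : ℕ) ^ j ≤ 5 ^ (2 * j - 1) :=
      Nat.pow_le_pow_right (by norm_num) (by omega)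
    have h2 : A = 5 * B := by
      rw [hAdef, hB]
      conv_lhs => rw [show 2 * j = (2 * j - 1) + 1 from by omega, pow_succ]
      ring
    omega
  -- first application: cancel a^A against w
  obtain ⟨W, m, hmA, hlen1, heq1, _, _⟩ :=
    ThetaAux.append_pow_toWord w.toWord (FreeGroup.reduce_toWord w) 0 A
  rw [FreeGroup.mk_toWord] at heq1
  have hwlen : w.toWord.length = w.norm := rfl
  rw [hwlen] at hlen1
  have hWle : W.length ≤ w.norm := by omega
  have hm1 : 1 ≤ m := by omega
  -- second application: append b^A, no cancellation
  obtain ⟨W', m', hm'A, hlen2, heq2, hlast2, hpre2⟩ :=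
    ThetaAux.append_pow_toWord (W ++ List.replicate m ((0 : Fin 3), true))
      (by rw [← heq1]; exact FreeGroup.reduce_toWord _) 1 A
  rw [show FreeGroup.mk (W ++ List.replicate m ((0 : Fin 3), true))
      = w * FreeGroup.of 0 ^ A from by rw [← heq1, FreeGroup.mk_toWord]] at heq2
  rw [show w * FreeGroup.of 0 ^ A * FreeGroup.of 1 ^ A = xgen v j from hx.symm] at heq2
  have hm'eq : m' = A := by
    by_contra hne
    have hlast := hlast2 (by omega)
    have : (W ++ List.replicate m ((0 : Fin 3), true)).getLast? = some ((0 : Fin 3), true) := by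
      rw [List.getLast?_append, List.getLast?_replicate]
      simp [show m ≠ 0 from by omega]
    rw [this] at hlast
    simp at hlast
  rw [hm'eq] at hlen2 heq2
  have hW'eq : W' = W ++ List.replicate m ((0 : Fin 3), true) :=
    hpre2.eq_of_length (by omega)
  rw [hW'eq] at heq2
  -- heq2 : (xgen v j).toWord = (W ++ rep m a) ++ rep A b
  have hnormx : (xgen v j).norm = W.length + m + A := by
    rw [show (xgen v j).norm = (xgen v j).toWord.length from rfl, heq2]
    simp
    omega
  have hsplit : (xgen v j).toWord = z.toWord ++ y.toWord := by
    rw [hzy]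
    exact ThetaAux.toWord_mul_of_norm_add z y (by rw [← hzy]; exact hred)
  have hy : y.toWord
      = ((W ++ List.replicate m ((0 : Fin 3), true)) ++ List.replicate A ((1 : Fin 3), true)).drop
          z.norm := by
    rw [← heq2, hsplit, show z.norm = z.toWord.length from rfl,
      List.drop_append]
    simp
  have hty : theta y = (y.toWord.map ThetaAux.cLtr).sum := by
    conv_lhs => rw [← FreeGroup.mk_toWord (x := y)]
    rw [ThetaAux.theta_mk]
  have c0 : ThetaAux.cLtr ((0 : Fin 3), true) = 1 := by decide
  have c1 : ThetaAux.cLtr ((1 : Fin 3), true) = 1 := by decide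
  by_cases hcase : z.norm ≤ W.length
  · -- z ends inside W
    have hyw : y.toWord = (W.drop z.norm ++ List.replicate m ((0 : Fin 3), true))
        ++ List.replicate A ((1 : Fin 3), true) := by
      rw [hy, List.drop_append, List.drop_append,
        show z.norm - W.length = 0 from by omega,
        show z.norm - (W ++ List.replicate m ((0 : Fin 3), true)).length = 0 from by
          simp; omega]
      simp
    have hsum : theta y = ((W.drop z.norm).map ThetaAux.cLtr).sum + m + A := by
      rw [hty, hyw]
      simp [List.map_append, List.sum_append, List.map_replicate, c0, c1,
        List.sum_replicate, smul_eq_mul]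
      ring
    have hS : -((W.drop z.norm).length : ℤ) ≤ ((W.drop z.norm).map ThetaAux.cLtr).sum :=
      ThetaAux.sum_cLtr_ge _
    have hdl : (W.drop z.norm).length ≤ W.length := by
      rw [List.length_drop]; omega
    have hkey : 3 * W.length ≤ m + A := by omega
    rw [hnormx, hsum]
    push_cast
    have hdl' : ((W.drop z.norm).length : ℤ) ≤ (W.length : ℤ) := by exact_mod_cast hdl
    have hkey' : 3 * (W.length : ℤ) ≤ (m : ℤ) + A := by exact_mod_cast hkey
    linarith
  · -- z ends inside the positive tail
    have hyw2 : y.toWord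
        = (List.replicate m ((0 : Fin 3), true)).drop (z.norm - W.length)
          ++ (List.replicate A ((1 : Fin 3), true)).drop
              (z.norm - (W ++ List.replicate m ((0 : Fin 3), true)).length) := by
      rw [hy, List.drop_append, List.drop_append,
        List.drop_eq_nil_of_le (by omega)]
      simp
    have hall : ∀ p ∈ y.toWord, p = ((0 : Fin 3), true) ∨ p = ((1 : Fin 3), true) := by
      intro p hp
      rw [hyw2] at hp
      rcases List.mem_append.mp hp with h | h
      · exact Or.inl (List.eq_of_mem_replicate (List.mem_of_mem_drop h))
      · exact Or.inr (List.eq_of_mem_replicate (List.mem_of_mem_drop h))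
    have hth : theta y = (y.toWord.length : ℤ) := by
      rw [hty, ThetaAux.sum_cLtr_eq_length _ hall]
    have hyn : y.toWord.length = y.norm := rfl
    rw [hth, hyn]
    push_cast
    omega
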